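/- arXiv:math/9501202 — 2 statements merged into one kernel-verified Lean document; each statement's English description precedes it below -/
import Mathlib

section
/- In the abstract covering setting, assume additionally that X₀ is locally connected, that the Γ₀-action on X₀ is by homeomorphisms (a continuous action), and that U ⊆ X₀ is an open Γ₀-invariant set; put V = h(U). If A is a connected component of U and D is a connected component of V such that h(A) ⊆ D, then h(A) = D. (Abstract form of Lemma 1: the covering h maps each connected component of π₀⁻¹(T) onto a connected component of π⁻¹(T).) -/
/-- Abstract form of Lemma 1: in the abstract covering setting, with `X₀` locally
connected, the `Γ₀`-action on `X₀` continuous, and `U` an open `Γ₀`-invariant set,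
the covering `h` maps each connected component of `U` contained in a connected
component `D` of `h '' U` onto `D`. -/
theorem stmt_0 {X₀ X : Type*} [TopologicalSpace X₀] [TopologicalSpace X]
    [LocallyConnectedSpace X₀]
    {Γ₀ Γ : Type*} [Group Γ₀] [Group Γ] [MulAction Γ₀ X₀] [MulAction Γ X]
    (h : X₀ → X) (hcont : Continuous h) (hopen : IsOpenMap h)
    (hsurj : Function.Surjective h)
    (χ : Γ₀ →* Γ) (hequiv : ∀ (γ : Γ₀) (x : X₀), h (γ • x) = χ γ • h x)
    (hfib : ∀ x x' : X₀, h x = h x' → ∃ γ : Γ₀, γ • x = x')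
    (hfree : ∀ (g : Γ) (y : X), g • y = y → g = 1)
    (hact : ∀ γ : Γ₀, Continuous fun x : X₀ => γ • x)
    (U : Set X₀) (hUopen : IsOpen U) (hUinv : ∀ (γ : Γ₀), ∀ x ∈ U, γ • x ∈ U)
    (A : Set X₀) (hA : ∃ x ∈ U, A = connectedComponentIn U x)
    (D : Set X) (hD : ∃ y ∈ h '' U, D = connectedComponentIn (h '' U) y)
    (hsub : h '' A ⊆ D) :
    h '' A = D := by
  obtain ⟨x₀, hx₀U, hAeq⟩ := hA
  obtain ⟨y₀, hy₀V, hDeq⟩ := hD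
  set S : Set X := h '' A with hS
  -- A is open
  have hAopen : IsOpen A := hAeq ▸ hUopen.connectedComponentIn
  have hSopen : IsOpen S := hopen A hAopen
  -- key: if a point of a component B of U with h x ∉ S has image in S, contradiction
  have key : ∀ x ∈ U, ∀ b ∈ connectedComponentIn U x, h b ∈ S → h x ∈ S := by
    intro x hxU b hb hbS
    obtain ⟨a, haA, hab⟩ := hbS
    obtain ⟨γ, hγ⟩ := hfib b a hab.symm
    have hχ : χ γ = 1 := by
      apply hfree (χ γ) (h b)
      have : h (γ • b) = h b := by rw [hγ, hab]
      rw [hequiv] at this; exact this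
    -- γ • B ⊆ A
    have hBU : connectedComponentIn U x ⊆ U := connectedComponentIn_subset U x
    have hpre : IsPreconnected ((fun z : X₀ => γ • z) '' connectedComponentIn U x) :=
      (isPreconnected_connectedComponentIn).image _ ((hact γ).continuousOn)
    have hsubU : (fun z : X₀ => γ • z) '' connectedComponentIn U x ⊆ U := by
      rintro _ ⟨z, hz, rfl⟩; exact hUinv γ z (hBU hz)
    have haMem : a ∈ (fun z : X₀ => γ • z) '' connectedComponentIn U x :=
      ⟨b, hb, hγ⟩
    have hsubA : (fun z : X₀ => γ • z) '' connectedComponentIn U x ⊆ A := by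
      have h1 := hpre.subset_connectedComponentIn haMem hsubU
      have h2 : connectedComponentIn U a = connectedComponentIn U x₀ :=
        (connectedComponentIn_eq (show a ∈ connectedComponentIn U x₀ by rw [← hAeq]; exact haA)).symm
      rw [h2, ← hAeq] at h1; exact h1
    have hγx : γ • x ∈ A := hsubA ⟨x, mem_connectedComponentIn hxU, rfl⟩
    have : h (γ • x) = h x := by rw [hequiv, hχ, one_smul]
    exact ⟨γ • x, hγx, this⟩
  -- define the open complement
  set v : Set X := ⋃ x ∈ {x | x ∈ U ∧ h x ∉ S}, h '' connectedComponentIn U x with hv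
  have hvopen : IsOpen v := by
    apply isOpen_biUnion
    intro x _
    exact hopen _ hUopen.connectedComponentIn
  have hdisj : Disjoint S v := by
    rw [Set.disjoint_left]
    rintro z hzS hzv
    simp only [hv, Set.mem_iUnion] at hzv
    obtain ⟨x, ⟨hxU, hxS⟩, b, hb, rfl⟩ := hzv
    exact hxS (key x hxU b hb hzS)
  have hcover : h '' U ⊆ S ∪ v := by
    rintro _ ⟨x, hxU, rfl⟩
    by_cases hx : h x ∈ S
    · exact Or.inl hx
    · refine Or.inr ?_
      simp only [hv, Set.mem_iUnion]
      exact ⟨x, ⟨hxU, hx⟩, x, mem_connectedComponentIn hxU, rfl⟩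
  -- D is preconnected, meets S, contained in h '' U
  have hDpre : IsPreconnected D := hDeq ▸ isPreconnected_connectedComponentIn
  have hDV : D ⊆ h '' U := hDeq ▸ connectedComponentIn_subset _ _
  have hSne : S.Nonempty := ⟨h x₀, x₀, hAeq ▸ mem_connectedComponentIn hx₀U, rfl⟩
  obtain ⟨s, hsS⟩ := hSne
  have hDS : (D ∩ S).Nonempty := ⟨s, hsub hsS, hsS⟩
  have : D ⊆ S :=
    hDpre.subset_left_of_subset_union hSopen hvopen hdisj
      (fun z hz => hcover (hDV hz)) hDS
  exact le_antisymm hsub this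
end

section
/- In the holomorphic equivariance setting, assume in addition that deriv h and deriv γ are nonzero at every point of U₀ and that h maps U₀ onto U. Suppose μ, ν : ℂ → ℂ are related by the pullback relation ν(h(z)) = μ(z)·(deriv h z)/conj(deriv h z) for all z ∈ U₀, and that μ satisfies the Beltrami automorphy law for γ on U₀, namely μ(γ(z))·conj(deriv γ z)/(deriv γ z) = μ(z) for all z ∈ U₀. Then ν satisfies the Beltrami automorphy law for g on U: ν(g(w))·conj(deriv g w)/(deriv g w) = ν(w) for all w ∈ U. (This is the equivariance which makes (h*μ)∘h = μ·h′/conj(h′) a well-defined map L∞(Γ₀,Δ₀) → L∞(Γ,Δ) in the proof of the Bers–Greenberg theorem.) -/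
/-- The pullback `h*μ` of a Beltrami coefficient satisfies the Beltrami automorphy
law: if `ν(h z) = μ z · h'(z)/conj(h'(z))` on `U₀` and
`μ(γ z)·conj(γ' z)/(γ' z) = μ z` on `U₀`, then
`ν(g w)·conj(g' w)/(g' w) = ν w` on `U`. -/
theorem stmt_5 {U₀ U : Set ℂ} (hU₀ : IsOpen U₀) (hU : IsOpen U)
    (h γ g : ℂ → ℂ)
    (hdh : ∀ z ∈ U₀, DifferentiableAt ℂ h z)
    (hdγ : ∀ z ∈ U₀, DifferentiableAt ℂ γ z)
    (hdg : ∀ w ∈ U, DifferentiableAt ℂ g w)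
    (hγmaps : ∀ z ∈ U₀, γ z ∈ U₀)
    (hhmaps : ∀ z ∈ U₀, h z ∈ U)
    (hgmaps : ∀ w ∈ U, g w ∈ U)
    (hcomm : ∀ z ∈ U₀, h (γ z) = g (h z))
    (hh' : ∀ z ∈ U₀, deriv h z ≠ 0)
    (hγ' : ∀ z ∈ U₀, deriv γ z ≠ 0)
    (hhsurj : ∀ w ∈ U, ∃ z ∈ U₀, h z = w)
    (μ ν : ℂ → ℂ)
    (hpull : ∀ z ∈ U₀, ν (h z) = μ z * deriv h z / (starRingEnd ℂ) (deriv h z))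
    (hμ : ∀ z ∈ U₀, μ (γ z) * (starRingEnd ℂ) (deriv γ z) / deriv γ z = μ z) :
    ∀ w ∈ U, ν (g w) * (starRingEnd ℂ) (deriv g w) / deriv g w = ν w := by
  intro w hw
  obtain ⟨z, hz, rfl⟩ := hhsurj w hw
  have hγz := hγmaps z hz
  have key : deriv g (h z) * deriv h z = deriv h (γ z) * deriv γ z := by
    have h1 : deriv (g ∘ h) z = deriv g (h z) * deriv h z :=
      deriv_comp z (hdg _ (hhmaps z hz)) (hdh z hz)
    have h2 : deriv (h ∘ γ) z = deriv h (γ z) * deriv γ z :=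
      deriv_comp z (hdh _ hγz) (hdγ z hz)
    have heq : (h ∘ γ) =ᶠ[nhds z] (g ∘ h) :=
      Filter.eventuallyEq_of_mem (hU₀.mem_nhds hz) (fun x hx => hcomm x hx)
    rw [← h1, ← h2, heq.deriv_eq]
  set A := deriv h z with hA
  set B := deriv γ z with hB
  set C := deriv h (γ z) with hC
  set G := deriv g (h z) with hG
  have hA0 : A ≠ 0 := hh' z hz
  have hB0 : B ≠ 0 := hγ' z hz
  have hC0 : C ≠ 0 := hh' _ hγz
  have hG0 : G ≠ 0 := by
    intro h0
    rw [h0, zero_mul] at key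
    exact hC0 (by simpa [hB0] using mul_eq_zero.mp key.symm |>.resolve_right hB0)
  have hA0' : (starRingEnd ℂ) A ≠ 0 := by simpa using hA0
  have hB0' : (starRingEnd ℂ) B ≠ 0 := by simpa using hB0
  have hC0' : (starRingEnd ℂ) C ≠ 0 := by simpa using hC0
  have hG0' : (starRingEnd ℂ) G ≠ 0 := by simpa using hG0
  have e1 : ν (g (h z)) = μ (γ z) * C / (starRingEnd ℂ) C := by
    rw [← hcomm z hz]; exact hpull _ hγz
  have e2 : ν (h z) = μ z * A / (starRingEnd ℂ) A := hpull z hz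
  have e3 : μ (γ z) * (starRingEnd ℂ) B / B = μ z := hμ z hz
  have keyc : (starRingEnd ℂ) G * (starRingEnd ℂ) A = (starRingEnd ℂ) C * (starRingEnd ℂ) B := by
    rw [← map_mul, key, map_mul]
  rw [e1, e2, ← e3]
  field_simp
  linear_combination μ (γ z) * (A * G * keyc - (starRingEnd ℂ) A * (starRingEnd ℂ) G * key)
end
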